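/- arXiv:2405.10636 — 5 statements merged into one kernel-verified Lean document; each statement's English description precedes it below -/
import Mathlib

section
/- Let X be a real-valued random variable on a probability space with 0 ≤ X ≤ M almost surely for some M > 0, and suppose Var X ≥ σ² for some σ > 0. Then for every real number r one has P[|X − r| ≥ σ/2] ≥ (9/16)·σ⁴/(σ⁴ + M⁴). -/
open MeasureTheory ProbabilityTheory

lemma variance_sub_const' {Ω : Type*} [MeasurableSpace Ω] (P : Measure Ω)
    [IsProbabilityMeasure P] (X : Ω → ℝ) (hX : Integrable X P) (r : ℝ) :
    variance (fun ω => X ω - r) P = variance X P := by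
  unfold ProbabilityTheory.variance ProbabilityTheory.evariance
  congr 1
  refine lintegral_congr fun ω => ?_
  have : ∫ ω, (X ω - r) ∂P = (∫ ω, X ω ∂P) - r := by
    rw [integral_sub hX (integrable_const r), integral_const]
    simp
  rw [this]
  ring_nf

/-- If `0 ≤ X ≤ M` almost surely and `Var X ≥ σ²`, then
`P[|X − r| ≥ σ/2] ≥ (9/16)·σ⁴/(σ⁴ + M⁴)` for every real `r`. -/
theorem stmt_0 {Ω : Type*} [MeasurableSpace Ω] (P : Measure Ω) [IsProbabilityMeasure P]
    (X : Ω → ℝ) (hX : Measurable X) (M σ : ℝ) (hM : 0 < M) (hσ : 0 < σ)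
    (hbd : ∀ᵐ ω ∂P, 0 ≤ X ω ∧ X ω ≤ M)
    (hvar : σ ^ 2 ≤ variance X P) (r : ℝ) :
    ENNReal.ofReal ((9 / 16) * σ ^ 4 / (σ ^ 4 + M ^ 4)) ≤ P {ω | σ / 2 ≤ |X ω - r|} := by
  set A : Set Ω := {ω | σ / 2 ≤ |X ω - r|} with hA
  have hAm : MeasurableSet A := measurableSet_le measurable_const ((hX.sub_const r).abs)
  -- integrability of X
  have hXint : Integrable X P := by
    refine Integrable.mono' (integrable_const M) hX.aestronglyMeasurable ?_
    filter_upwards [hbd] with ω ⟨h0, h1⟩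
    rw [Real.norm_eq_abs, abs_of_nonneg h0]; exact h1
  -- σ ≤ M, via σ² ≤ Var X ≤ E[X²] ≤ M²
  have hX2 : Integrable (fun ω => X ω ^ 2) P := by
    refine Integrable.mono' (integrable_const (M ^ 2)) (hX.pow_const 2).aestronglyMeasurable ?_
    filter_upwards [hbd] with ω ⟨h0, h1⟩
    rw [Real.norm_eq_abs, abs_of_nonneg (sq_nonneg _)]
    exact pow_le_pow_left₀ h0 h1 2
  have hσM : σ ≤ M := by
    have h1 : variance X P ≤ ∫ ω, X ω ^ 2 ∂P :=
      variance_le_expectation_sq hX.aestronglyMeasurable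
    have h2 : ∫ ω, X ω ^ 2 ∂P ≤ M ^ 2 := by
      calc ∫ ω, X ω ^ 2 ∂P ≤ ∫ _ω, M ^ 2 ∂P := by
            refine integral_mono_ae hX2 (integrable_const _) ?_
            filter_upwards [hbd] with ω ⟨h0, h1⟩
            exact pow_le_pow_left₀ h0 h1 2
        _ = M ^ 2 := by simp
    have : σ ^ 2 ≤ M ^ 2 := le_trans hvar (le_trans h1 h2)
    exact (pow_le_pow_iff_left₀ hσ.le hM.le two_ne_zero).mp this
  by_cases hr : -(σ/2) ≤ r ∧ r ≤ M + σ/2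
  · -- main case
    obtain ⟨hr1, hr2⟩ := hr
    set Y : Ω → ℝ := fun ω => X ω - r with hY
    have hYint : Integrable Y P := hXint.sub (integrable_const r)
    have hvarY : σ ^ 2 ≤ variance Y P := by
      rw [hY, variance_sub_const' P X hXint r]; exact hvar
    have hY2int : Integrable (fun ω => Y ω ^ 2) P := by
      refine Integrable.mono' (integrable_const ((3/2*M) ^ 2))
        ((hX.sub_const r).pow_const 2).aestronglyMeasurable ?_
      filter_upwards [hbd] with ω ⟨h0, h1⟩
      rw [Real.norm_eq_abs, abs_of_nonneg (sq_nonneg _), ← sq_abs]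
      refine pow_le_pow_left₀ (abs_nonneg _) ?_ 2
      rw [abs_le]
      constructor <;> simp only [hY] <;> nlinarith
    have hind : Integrable (fun ω => A.indicator (fun _ => (3/2*M)^2) ω + σ^2/4) P :=
      ((integrable_const _).indicator hAm).add (integrable_const _)
    have key : σ ^ 2 ≤ (3/2*M)^2 * (P A).toReal + σ^2/4 := by
      have h1 : variance Y P ≤ ∫ ω, Y ω ^ 2 ∂P := by
        have := variance_le_expectation_sq (μ := P)
          (hX.sub_const r).aestronglyMeasurable
        simpa [hY] using this
      have h2 : ∫ ω, Y ω ^ 2 ∂P ≤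
          ∫ ω, (A.indicator (fun _ => (3/2*M)^2) ω + σ^2/4) ∂P := by
        refine integral_mono_ae hY2int hind ?_
        filter_upwards [hbd] with ω ⟨h0, h1⟩
        by_cases hωA : ω ∈ A
        · rw [Set.indicator_of_mem hωA]
          have habs : |Y ω| ≤ 3/2*M := by
            rw [abs_le]; constructor <;> simp only [hY] <;> nlinarith
          nlinarith [abs_nonneg (Y ω), sq_abs (Y ω), sq_nonneg σ,
            pow_le_pow_left₀ (abs_nonneg (Y ω)) habs 2]
        · rw [Set.indicator_of_notMem hωA]
          have : |Y ω| < σ/2 := by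
            simp only [hA, Set.mem_setOf_eq, not_le] at hωA; exact hωA
          have h4 : Y ω ^ 2 ≤ (σ/2)^2 := by
            rw [← sq_abs]; exact pow_le_pow_left₀ (abs_nonneg _) this.le 2
          nlinarith [h4]
      have h3 : ∫ ω, (A.indicator (fun _ => (3/2*M)^2) ω + σ^2/4) ∂P
          = (3/2*M)^2 * (P A).toReal + σ^2/4 := by
        rw [integral_add ((integrable_const _).indicator hAm) (integrable_const _),
          integral_indicator_const _ hAm, integral_const]
        simp [mul_comm, Measure.real]
      linarith [le_trans hvarY (le_trans h1 (h2.trans_eq h3))]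
    have hp : σ^2 / (3 * M^2) ≤ (P A).toReal := by
      rw [div_le_iff₀ (by positivity)]
      nlinarith
    refine ENNReal.ofReal_le_of_le_toReal (le_trans ?_ hp)
    rw [div_le_div_iff₀ (by positivity) (by positivity)]
    nlinarith [sq_nonneg (σ^2 - M^2), sq_nonneg σ, sq_nonneg M, pow_pos hσ 2, pow_pos hM 2,
      mul_pos (pow_pos hσ 2) (pow_pos hM 2)]
  · -- r outside [-σ/2, M+σ/2]: A has full measure
    have hfull : P A = 1 := by
      rw [← measure_univ (μ := P)]
      refine measure_congr (Filter.eventuallyEq_set.2 ?_)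
      filter_upwards [hbd] with ω ⟨h0, h1⟩
      simp only [Set.mem_univ, true_iff, iff_true, hA, Set.mem_setOf_eq]
      rcases not_and_or.mp hr with h | h <;> push_neg at h
      · have := neg_abs_le (X ω - r)
        have := le_abs_self (X ω - r)
        linarith
      · have := neg_abs_le (X ω - r)
        linarith
    rw [hfull]
    refine ENNReal.ofReal_le_one.2 ?_
    rw [div_le_one (by positivity)]
    nlinarith [pow_pos hσ 4, pow_pos hM 4]
end

section
/- For all γ > 0, 0 < ρ < 1 and M > 0 there exist 0 < p₋(γ,ρ,M) < p₊(γ,ρ,M) < 1 and ι(γ,ρ,M) > 0 such that every real random variable X with 0 ≤ X ≤ M almost surely that is anti-concentrated with gap γ and remainder ρ admits, for some p with p₋ ≤ p ≤ p₊, a p-Bernoulli decomposition X ≐ Y(t) + Z(t)·ξ in which Z(t) ≥ ι for every t ∈ (0,1). -/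
open MeasureTheory ProbabilityTheory

/-- The law of a Bernoulli random variable with success probability `p`,
as a measure on `ℝ` (mass `1 - p` at `0` and `p` at `1`). -/
noncomputable def bernoulliLaw (p : ℝ) : Measure ℝ :=
  ENNReal.ofReal (1 - p) • Measure.dirac (0 : ℝ) + ENNReal.ofReal p • Measure.dirac (1 : ℝ)

/-- The uniform distribution on `(0,1)`. -/
noncomputable def unif01 : Measure ℝ := volume.restrict (Set.Ioo (0 : ℝ) 1)

/-- `(Y, Z)` is a `p`-Bernoulli decomposition of the random variable `X`:
for `t` uniform on `(0,1)` and `ξ` Bernoulli(`p`) independent of `t`,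
`Y t + Z t · ξ` has the same law as `X`. -/
def IsBernoulliDecomp {Ω : Type*} [MeasurableSpace Ω] (P : Measure Ω) (X : Ω → ℝ)
    (p : ℝ) (Y Z : ℝ → ℝ) : Prop :=
  Measurable Y ∧ Measurable Z ∧
    Measure.map (fun q : ℝ × ℝ => Y q.1 + Z q.1 * q.2) (unif01.prod (bernoulliLaw p)) =
      Measure.map X P

/-! ### Auxiliary quantile machinery -/

open Set Filter

noncomputable section QtlAux

/-- real-valued CDF -/
def cdfR (ν : Measure ℝ) (x : ℝ) : ℝ := (ν (Iic x)).toReal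

/-- quantile function (with clamping to avoid junk behaviour outside `[0,1]`) -/
def qtl (ν : Measure ℝ) (t : ℝ) : ℝ :=
  sInf {x : ℝ | 0 ≤ x ∧ max (min t 1) 0 ≤ cdfR ν x}

instance : IsProbabilityMeasure unif01 := by
  constructor
  rw [unif01, Measure.restrict_apply MeasurableSet.univ]
  simp [Real.volume_Ioo]

section Qtl1
set_option linter.unusedSectionVars false

variable {ν : Measure ℝ} [IsProbabilityMeasure ν]

lemma cdfR_mono : Monotone (cdfR ν) := fun a b hab => by
  apply ENNReal.toReal_mono (measure_ne_top ν _) (measure_mono (Iic_subset_Iic.2 hab))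

lemma cdfR_nonneg (x : ℝ) : 0 ≤ cdfR ν x := ENNReal.toReal_nonneg

lemma cdfR_le_one (x : ℝ) : cdfR ν x ≤ 1 := by
  have := prob_le_one (μ := ν) (s := Iic x)
  simpa [cdfR] using ENNReal.toReal_mono (by simp) this

lemma cdfR_right_lim (x : ℝ) :
    Tendsto (fun n : ℕ => cdfR ν (x + 1 / (n + 1))) atTop (nhds (cdfR ν x)) := by
  have h1 : Tendsto (fun n : ℕ => ν (Iic (x + 1 / (n + 1)))) atTop
      (nhds (ν (⋂ n : ℕ, Iic (x + 1 / ((n : ℝ) + 1))))) := by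
    apply tendsto_measure_iInter_atTop (fun n => (measurableSet_Iic).nullMeasurableSet)
    · intro a b hab
      apply Iic_subset_Iic.2
      have : (1 : ℝ) / (b + 1) ≤ 1 / (a + 1) := by
        apply one_div_le_one_div_of_le (by positivity)
        exact_mod_cast by omega
      linarith
    · exact ⟨0, measure_ne_top ν _⟩
  have hset : (⋂ n : ℕ, Iic (x + 1 / ((n : ℝ) + 1))) = Iic x := by
    ext y
    simp only [mem_iInter, mem_Iic]
    constructor
    · intro h
      have hlim : Tendsto (fun n : ℕ => x + 1 / ((n : ℝ) + 1)) atTop (nhds x) := by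
        have := tendsto_one_div_add_atTop_nhds_zero_nat (𝕜 := ℝ)
        have := this.const_add x
        simpa using this
      exact ge_of_tendsto hlim (Eventually.of_forall h)
    · intro h n
      have : (0:ℝ) < 1 / ((n : ℝ) + 1) := by positivity
      linarith
  rw [hset] at h1
  exact (ENNReal.tendsto_toReal (measure_ne_top ν _)).comp h1

lemma qtl_set_bddBelow (t : ℝ) : BddBelow {x : ℝ | 0 ≤ x ∧ max (min t 1) 0 ≤ cdfR ν x} :=
  ⟨0, fun x hx => hx.1⟩

lemma qtl_set_nonempty {R : ℝ} (hR0 : 0 ≤ R) (hR : ν (Iic R) = 1) (t : ℝ) :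
    Set.Nonempty {x : ℝ | 0 ≤ x ∧ max (min t 1) 0 ≤ cdfR ν x} := by
  refine ⟨R, hR0, ?_⟩
  have h1 : cdfR ν R = 1 := by simp [cdfR, hR]
  rw [h1]
  simp only [max_le_iff, le_refl, and_true]
  constructor
  · exact le_trans (min_le_right t 1) le_rfl
  · norm_num

lemma qtl_mono {R : ℝ} (hR0 : 0 ≤ R) (hR : ν (Iic R) = 1) : Monotone (qtl ν) := by
  intro a b hab
  apply csInf_le_csInf (qtl_set_bddBelow a) (qtl_set_nonempty hR0 hR b)
  intro x hx
  exact ⟨hx.1, le_trans (by gcongr) hx.2⟩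

/-- key: t ≤ F(q(t)) for 0 < t ≤ 1 -/
lemma le_cdfR_qtl {R : ℝ} (hR0 : 0 ≤ R) (hR : ν (Iic R) = 1) {t : ℝ} (ht0 : 0 < t) (ht1 : t ≤ 1) :
    t ≤ cdfR ν (qtl ν t) := by
  have hclamp : max (min t 1) 0 = t := by
    rw [min_eq_left ht1, max_eq_left ht0.le]
  have key : ∀ n : ℕ, t ≤ cdfR ν (qtl ν t + 1 / (n + 1)) := by
    intro n
    have hlt : qtl ν t < qtl ν t + 1 / (n + 1) := by
      have : (0:ℝ) < 1 / ((n:ℝ) + 1) := by positivity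
      linarith
    obtain ⟨y, hy, hy2⟩ := (csInf_lt_iff (qtl_set_bddBelow t) (qtl_set_nonempty hR0 hR t)).1 hlt
    calc t = max (min t 1) 0 := hclamp.symm
      _ ≤ cdfR ν y := hy.2
      _ ≤ _ := cdfR_mono hy2.le
  exact ge_of_tendsto (cdfR_right_lim (qtl ν t)) (Eventually.of_forall key)

lemma qtl_le_iff {R : ℝ} (hR0 : 0 ≤ R) (hR : ν (Iic R) = 1) (h0 : ν (Iio 0) = 0)
    {t : ℝ} (ht0 : 0 < t) (ht1 : t ≤ 1) (x : ℝ) :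
    qtl ν t ≤ x ↔ t ≤ cdfR ν x := by
  constructor
  · intro h
    exact le_trans (le_cdfR_qtl hR0 hR ht0 ht1) (cdfR_mono h)
  · intro h
    apply csInf_le (qtl_set_bddBelow t)
    refine ⟨?_, ?_⟩
    · by_contra hx
      push_neg at hx
      have : ν (Iic x) ≤ ν (Iio 0) := measure_mono (fun y hy => lt_of_le_of_lt hy hx)
      rw [h0] at this
      have hz : cdfR ν x = 0 := by
        simp [cdfR, le_antisymm this zero_le]
      rw [hz] at h; linarith
    · rw [min_eq_left ht1, max_eq_left ht0.le]; exact h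

lemma qtl_measurable {R : ℝ} (hR0 : 0 ≤ R) (hR : ν (Iic R) = 1) : Measurable (qtl ν) :=
  (qtl_mono hR0 hR).measurable

lemma map_qtl {R : ℝ} (hR0 : 0 ≤ R) (hR : ν (Iic R) = 1) (h0 : ν (Iio 0) = 0) :
    Measure.map (qtl ν) unif01 = ν := by
  have hmeas := qtl_measurable (ν := ν) hR0 hR
  have : IsProbabilityMeasure (Measure.map (qtl ν) unif01) :=
    Measure.isProbabilityMeasure_map hmeas.aemeasurable
  apply Measure.ext_of_Iic
  intro x
  rw [Measure.map_apply hmeas measurableSet_Iic, unif01,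
    Measure.restrict_apply (hmeas measurableSet_Iic)]
  have hseteq : qtl ν ⁻¹' Iic x ∩ Ioo 0 1 = Iic (cdfR ν x) ∩ Ioo 0 1 := by
    ext t
    simp only [mem_inter_iff, mem_preimage, mem_Iic, mem_Ioo, and_congr_left_iff]
    intro ht
    exact qtl_le_iff hR0 hR h0 ht.1 ht.2.le x
  rw [hseteq]
  rcases lt_or_ge (cdfR ν x) 1 with hc | hc
  · have : Iic (cdfR ν x) ∩ Ioo (0:ℝ) 1 = Ioc 0 (cdfR ν x) := by
      ext t
      simp only [mem_inter_iff, mem_Iic, mem_Ioo, mem_Ioc]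
      constructor
      · rintro ⟨h1, h2, h3⟩; exact ⟨h2, h1⟩
      · rintro ⟨h1, h2⟩; exact ⟨h2, h1, lt_of_le_of_lt h2 hc⟩
    rw [this, Real.volume_Ioc]
    simp only [sub_zero]
    rw [cdfR, ENNReal.ofReal_toReal (measure_ne_top ν _)]
  · have hsub : Ioo (0:ℝ) 1 ⊆ Iic (cdfR ν x) := fun t ht => le_trans ht.2.le hc
    rw [inter_eq_self_of_subset_right hsub, Real.volume_Ioo]
    have h1 : cdfR ν x = 1 := le_antisymm (cdfR_le_one x) hc
    have : ν (Iic x) = 1 := by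
      have := congrArg ENNReal.ofReal h1
      rwa [cdfR, ENNReal.ofReal_toReal (measure_ne_top ν _), ENNReal.ofReal_one] at this
    rw [this]; norm_num

end Qtl1

section QtlGap
set_option linter.unusedSectionVars false
variable {ν₀ ν₁ : Measure ℝ} [IsProbabilityMeasure ν₀] [IsProbabilityMeasure ν₁]

lemma qtl_gap {R : ℝ} (hR0 : 0 ≤ R) (hR : ν₀ (Iic R) = 1) (hR' : ν₁ (Iic R) = 1)
    (h0 : ν₀ (Iio 0) = 0) {ι : ℝ}
    (hcdf : ∀ c : ℝ, cdfR ν₁ (c + ι) ≤ cdfR ν₀ c)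
    {t : ℝ} (ht0 : 0 < t) (ht1 : t ≤ 1) :
    qtl ν₀ t + ι ≤ qtl ν₁ t := by
  have h1 : t ≤ cdfR ν₁ (qtl ν₁ t) := le_cdfR_qtl hR0 hR' ht0 ht1
  have h2 : t ≤ cdfR ν₀ (qtl ν₁ t - ι) := by
    have := hcdf (qtl ν₁ t - ι)
    rw [sub_add_cancel] at this
    exact le_trans h1 this
  have := (qtl_le_iff hR0 hR h0 ht0 ht1 (qtl ν₁ t - ι)).2 h2
  linarith

end QtlGap

lemma prod_smul_right' (μ : Measure ℝ) [SFinite μ] (c : ENNReal) (ν : Measure ℝ) [SFinite ν] :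
    μ.prod (c • ν) = c • μ.prod ν := by
  ext s hs
  rw [Measure.prod_apply hs, Measure.smul_apply, Measure.prod_apply hs]
  simp only [Measure.smul_apply, smul_eq_mul]
  rw [lintegral_const_mul _ (measurable_measure_prodMk_left hs)]

end QtlAux

open Set Filter

set_option maxHeartbeats 1000000 in
/-- Core decomposition lemma at the level of the law `μ`. -/
lemma main_decomp (γ ρ M : ℝ) (hγ : 0 < γ) (hρ0 : 0 < ρ) (hρ1 : ρ < 1) (hM : 0 < M)
    (μ : Measure ℝ) [IsProbabilityMeasure μ]
    (hμ0 : μ (Iio 0) = 0) (hμM : μ (Ioi M) = 0)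
    (hwin : ∀ z ∈ Icc (0:ℝ) M, μ (Icc (z - γ/2) (z + γ/2)) ≤ ENNReal.ofReal (1 - ρ)) :
    ∃ p : ℝ, ρ/2 ≤ p ∧ p ≤ 1 - ρ/8 ∧
      ∃ Y Z : ℝ → ℝ, Measurable Y ∧ Measurable Z ∧
        (∀ t ∈ Ioo (0:ℝ) 1, γ*ρ^2/128 ≤ Z t) ∧
        ENNReal.ofReal (1-p) • Measure.map Y unif01
          + ENNReal.ofReal p • Measure.map (fun t => Y t + Z t) unif01 = μ := by
  classical
  set ι : ℝ := γ*ρ^2/128 with hι_def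
  have hι : 0 < ι := by positivity
  set n : ℕ := ⌈(32:ℝ)/ρ^2⌉₊ with hn_def
  have hn_ge : (32:ℝ)/ρ^2 ≤ n := Nat.le_ceil _
  have hn_lt : (n:ℝ) < 32/ρ^2 + 1 := Nat.ceil_lt_add_one (by positivity)
  have hn_pos : 0 < n := by
    have : (0:ℝ) < 32/ρ^2 := by positivity
    exact_mod_cast Nat.ceil_pos.2 this
  have hρ2le : ρ^2 ≤ 1 := by nlinarith
  have hnι : ((n:ℝ)+3) * ι ≤ 5*γ/16 := by
    have h1 : ((n:ℝ)+3) * ι ≤ (32/ρ^2 + 4) * (γ*ρ^2/128) := by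
      apply mul_le_mul (by linarith) le_rfl hι.le (by positivity)
    calc ((n:ℝ)+3) * ι ≤ (32/ρ^2 + 4) * (γ*ρ^2/128) := h1
      _ = γ/4 + γ*ρ^2/32 := by field_simp; ring
      _ ≤ γ/4 + γ/16 := by nlinarith
      _ = 5*γ/16 := by ring
  set δ : ℝ := γ/2 - ((n:ℝ)+3)*ι with hδ_def
  have hδ : 0 < δ := by
    have : ((n:ℝ)+3)*ι ≤ 5*γ/16 := hnι
    simp only [hδ_def]; linarith
  -- the set S and c₁
  set S : Set ℝ := {c : ℝ | (μ (Ioi c)).toReal ≤ 1 - ρ/4} with hS_def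
  have hMS : M ∈ S := by
    simp only [hS_def, mem_setOf_eq, hμM]
    simp; linarith
  have hSne : S.Nonempty := ⟨M, hMS⟩
  have hIci0 : μ (Ici (0:ℝ)) = 1 := by
    have := measure_add_measure_compl (μ := μ) (s := Iio (0:ℝ)) measurableSet_Iio
    rw [hμ0, compl_Iio, zero_add, measure_univ] at this
    exact this
  have hSbdd : BddBelow S := by
    refine ⟨0, fun c hc => ?_⟩
    by_contra hc0
    push_neg at hc0
    have h1 : μ (Ioi c) = 1 := by
      have hsub : Ici (0:ℝ) ⊆ Ioi c := fun x hx => lt_of_lt_of_le hc0 hx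
      have := measure_mono (μ := μ) hsub
      rw [hIci0] at this
      exact le_antisymm (prob_le_one : μ (Ioi c) ≤ 1) this
    simp only [hS_def, mem_setOf_eq, h1] at hc
    simp at hc; linarith
  set c₁ : ℝ := sInf S with hc₁_def
  have hc₁0 : 0 ≤ c₁ := le_csInf hSne (by
    intro c hc
    by_contra h
    push_neg at h
    have h1 : μ (Ioi c) = 1 := by
      have hsub : Ici (0:ℝ) ⊆ Ioi c := fun x hx => lt_of_lt_of_le h hx
      have := measure_mono (μ := μ) hsub
      rw [hIci0] at this
      exact le_antisymm (prob_le_one : μ (Ioi c) ≤ 1) this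
    simp only [hS_def, mem_setOf_eq, h1] at hc
    simp at hc; linarith)
  have hc₁M : c₁ ≤ M := csInf_le hSbdd hMS
  -- pigeonhole: some candidate interval has small mass
  have hpigeon : ∃ i : ℕ, i < n ∧
      μ (Ioc (c₁+((i:ℝ)+2)*ι) (c₁+((i:ℝ)+2)*ι+ι)) ≤ ENNReal.ofReal (ρ^2/16) := by
    by_contra hcon
    push_neg at hcon
    have hdisj : (↑(Finset.range n) : Set ℕ).PairwiseDisjoint
        (fun i : ℕ => Ioc (c₁+((i:ℝ)+2)*ι) (c₁+((i:ℝ)+2)*ι+ι)) := by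
      intro i _ j _ hij
      apply Ioc_disjoint_Ioc.2
      rcases hij.lt_or_gt with h | h
      · have hij' : (i:ℝ) + 1 ≤ j := by exact_mod_cast h
        apply le_trans (min_le_left _ _)
        apply le_trans _ (le_max_right _ _)
        nlinarith [hι.le]
      · have hij' : (j:ℝ) + 1 ≤ i := by exact_mod_cast h
        apply le_trans (min_le_right _ _)
        apply le_trans _ (le_max_left _ _)
        nlinarith [hι.le]
    have hsum := measure_biUnion_finset (μ := μ) hdisj
      (fun i _ => measurableSet_Ioc)
    have hlt : ∑ _x ∈ Finset.range n, ENNReal.ofReal (ρ^2/16)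
        ≤ ∑ i ∈ Finset.range n, μ (Ioc (c₁+((i:ℝ)+2)*ι) (c₁+((i:ℝ)+2)*ι+ι)) :=
      Finset.sum_le_sum (fun i hi => (hcon i (Finset.mem_range.1 hi)).le)
    have hone : (2:ENNReal) ≤ ∑ _x ∈ Finset.range n, ENNReal.ofReal (ρ^2/16) := by
      rw [Finset.sum_const, Finset.card_range, nsmul_eq_mul]
      have heq : ((n:ENNReal)) * ENNReal.ofReal (ρ^2/16)
          = ENNReal.ofReal ((n:ℝ) * (ρ^2/16)) := by
        rw [ENNReal.ofReal_mul (by positivity)]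
        congr 1
        simp [ENNReal.ofReal_natCast]
      rw [heq]
      have h2 : (2:ENNReal) = ENNReal.ofReal (2:ℝ) := by norm_num
      rw [h2]
      apply ENNReal.ofReal_le_ofReal
      calc (2:ℝ) = 32/ρ^2 * (ρ^2/16) := by field_simp; ring
        _ ≤ (n:ℝ) * (ρ^2/16) := mul_le_mul_of_nonneg_right hn_ge (by positivity)
    have hle : μ (⋃ i ∈ Finset.range n, Ioc (c₁+((i:ℝ)+2)*ι) (c₁+((i:ℝ)+2)*ι+ι)) ≤ 1 :=
      prob_le_one
    rw [hsum] at hle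
    have : (2:ENNReal) ≤ 1 := le_trans hone (le_trans hlt hle)
    norm_num at this
  obtain ⟨i, hin, hGap⟩ := hpigeon
  set cstar : ℝ := c₁ + ((i:ℝ)+2)*ι with hcstar_def
  have hcstar_lb : c₁ + ι ≤ cstar := by
    simp only [hcstar_def]
    nlinarith [hι.le, (Nat.cast_nonneg i : (0:ℝ) ≤ i)]
  have hcstar_lb2 : c₁ + 2*ι ≤ cstar := by
    simp only [hcstar_def]
    nlinarith [hι.le, (Nat.cast_nonneg i : (0:ℝ) ≤ i)]
  have hcstar_ub : cstar ≤ c₁ + ((n:ℝ)+1)*ι := by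
    simp only [hcstar_def]
    have : (i:ℝ) + 1 ≤ n := by exact_mod_cast hin
    nlinarith [hι.le]
  -- y ∈ S with y < c₁ + ι
  obtain ⟨y, hyS, hy⟩ : ∃ y ∈ S, y < c₁ + ι :=
    (csInf_lt_iff hSbdd hSne).1 (by simp only [← hc₁_def]; linarith)
  have hμIoiy : μ (Ioi y) ≤ ENNReal.ofReal (1 - ρ/4) := by
    have h1 : (μ (Ioi y)).toReal ≤ 1 - ρ/4 := hyS
    calc μ (Ioi y) = ENNReal.ofReal ((μ (Ioi y)).toReal) :=
          (ENNReal.ofReal_toReal (measure_ne_top μ _)).symm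
      _ ≤ ENNReal.ofReal (1 - ρ/4) := ENNReal.ofReal_le_ofReal h1
  have hP1up : μ (Ioi cstar) ≤ ENNReal.ofReal (1 - ρ/4) :=
    le_trans (measure_mono (Ioi_subset_Ioi (by linarith))) hμIoiy
  have hμIicy : ENNReal.ofReal (ρ/4) ≤ μ (Iic y) := by
    have hsum := measure_add_measure_compl (μ := μ) (s := Iic y) measurableSet_Iic
    rw [compl_Iic, measure_univ] at hsum
    have h2 : ENNReal.ofReal (ρ/4) + ENNReal.ofReal (1 - ρ/4) = 1 := by
      rw [← ENNReal.ofReal_add (by positivity) (by linarith)]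
      norm_num
    have h3 : ENNReal.ofReal (ρ/4) + ENNReal.ofReal (1 - ρ/4)
        ≤ μ (Iic y) + ENNReal.ofReal (1 - ρ/4) := by
      rw [h2, ← hsum]
      exact add_le_add_right hμIoiy _
    exact (ENNReal.add_le_add_iff_right ENNReal.ofReal_ne_top).1 h3
  have hB : ENNReal.ofReal (ρ/4) ≤ μ (Iic (cstar - ι)) :=
    le_trans hμIicy (measure_mono (Iic_subset_Iic.2 (by linarith)))
  -- lower bound for μ (Ioi cstar)
  have hP1low : ENNReal.ofReal (3*ρ/4) ≤ μ (Ioi cstar) := by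
    set c : ℝ := c₁ - δ with hc_def
    have hcS : c ∉ S := fun h => absurd (csInf_le hSbdd h) (by simp only [← hc₁_def]; linarith)
    have hTc : 1 - ρ/4 < (μ (Ioi c)).toReal := by
      by_contra h
      push_neg at h
      exact hcS h
    have hccstar : c ≤ cstar := by
      simp only [hc_def]
      have := hcstar_lb
      linarith [hδ.le, hι.le]
    have hunion : Ioc c cstar ∪ Ioi cstar = Ioi c := Ioc_union_Ioi_eq_Ioi hccstar
    have hdisj : Disjoint (Ioc c cstar) (Ioi cstar) := by
      apply Set.disjoint_left.2
      intro x hx hx2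
      exact absurd hx.2 (not_le.2 hx2)
    have hadd : μ (Ioc c cstar) + μ (Ioi cstar) = μ (Ioi c) := by
      rw [← hunion, measure_union hdisj measurableSet_Ioi]
    -- window bound for μ (Ioc c cstar)
    set z : ℝ := max c 0 with hz_def
    have hzIcc : z ∈ Icc (0:ℝ) M := by
      constructor
      · exact le_max_right _ _
      · apply max_le _ hM.le
        simp only [hc_def]; linarith
    have hsub : Ioc c cstar ⊆ Icc (z - γ/2) (z + γ/2) ∪ Iio 0 := by
      intro x hx
      rcases lt_or_ge x 0 with hx0 | hx0
      · exact Or.inr hx0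
      · left
        constructor
        · have : z ≤ x := max_le hx.1.le hx0
          linarith [hγ.le]
        · have h1 : x ≤ cstar := hx.2
          have h2 : z ≥ c := le_max_left _ _
          have h4 : c = c₁ - (γ/2 - ((n:ℝ)+3)*ι) := by rw [hc_def, hδ_def]
          have h5 : cstar ≤ c + γ/2 := by
            rw [h4]
            have := hcstar_ub
            nlinarith [hι.le]
          linarith
    have hwinb : μ (Ioc c cstar) ≤ ENNReal.ofReal (1 - ρ) := by
      calc μ (Ioc c cstar) ≤ μ (Icc (z - γ/2) (z + γ/2) ∪ Iio 0) := measure_mono hsub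
        _ ≤ μ (Icc (z - γ/2) (z + γ/2)) + μ (Iio 0) := measure_union_le _ _
        _ = μ (Icc (z - γ/2) (z + γ/2)) := by rw [hμ0, add_zero]
        _ ≤ ENNReal.ofReal (1 - ρ) := hwin z hzIcc
    -- pass to reals
    have ha : (μ (Ioc c cstar)).toReal ≤ 1 - ρ := by
      have := ENNReal.toReal_mono ENNReal.ofReal_ne_top hwinb
      rwa [ENNReal.toReal_ofReal (by linarith)] at this
    have haddR : (μ (Ioc c cstar)).toReal + (μ (Ioi cstar)).toReal = (μ (Ioi c)).toReal := by
      rw [← ENNReal.toReal_add (measure_ne_top μ _) (measure_ne_top μ _), hadd]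
    have hbR : 3*ρ/4 ≤ (μ (Ioi cstar)).toReal := by linarith
    calc ENNReal.ofReal (3*ρ/4) ≤ ENNReal.ofReal ((μ (Ioi cstar)).toReal) :=
          ENNReal.ofReal_le_ofReal hbR
      _ = μ (Ioi cstar) := ENNReal.ofReal_toReal (measure_ne_top μ _)
  -- define the pieces
  set P1 : ENNReal := μ (Ioi cstar) with hP1_def
  set P0 : ENNReal := μ (Iic cstar) with hP0_def
  have hsum01 : P0 + P1 = 1 := by
    have := measure_add_measure_compl (μ := μ) (s := Iic cstar) measurableSet_Iic
    rwa [compl_Iic, measure_univ] at this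
  have hP1ne0 : P1 ≠ 0 := by
    intro h
    rw [h] at hP1low
    simp at hP1low
    nlinarith
  have hP1top : P1 ≠ ⊤ := measure_ne_top μ _
  have hP0ne0 : P0 ≠ 0 := by
    intro h
    have h2 : μ (Iic (cstar - ι)) ≤ P0 := measure_mono (Iic_subset_Iic.2 (by linarith))
    rw [h] at h2
    have := le_antisymm h2 zero_le
    rw [this] at hB
    simp at hB
    nlinarith
  have hP0top : P0 ≠ ⊤ := measure_ne_top μ _
  set p : ℝ := P1.toReal with hp_def
  have hpl : 3*ρ/4 ≤ p := by
    have := ENNReal.toReal_mono hP1top hP1low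
    rwa [ENNReal.toReal_ofReal (by positivity)] at this
  have hpu : p ≤ 1 - ρ/4 := by
    have := ENNReal.toReal_mono ENNReal.ofReal_ne_top hP1up
    rw [ENNReal.toReal_ofReal (by linarith)] at this
    exact this
  have hofp : ENNReal.ofReal p = P1 := ENNReal.ofReal_toReal hP1top
  have hP0eq : P0 = 1 - P1 := ENNReal.eq_sub_of_add_eq hP1top hsum01
  have hofq : ENNReal.ofReal (1-p) = P0 := by
    rw [ENNReal.ofReal_sub 1 (by positivity), ENNReal.ofReal_one, hofp, hP0eq]
  have hq_toReal : P0.toReal = 1 - p := by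
    rw [← hofq, ENNReal.toReal_ofReal (by linarith)]
  -- the normalized measures
  set ν₀ : Measure ℝ := P0⁻¹ • μ.restrict (Iic cstar) with hν₀_def
  set ν₁ : Measure ℝ := P1⁻¹ • μ.restrict (Ioi cstar) with hν₁_def
  have hν₀prob : IsProbabilityMeasure ν₀ := by
    constructor
    rw [hν₀_def, Measure.smul_apply, Measure.restrict_apply_univ, smul_eq_mul,
      ENNReal.inv_mul_cancel hP0ne0 hP0top]
  have hν₁prob : IsProbabilityMeasure ν₁ := by
    constructor
    rw [hν₁_def, Measure.smul_apply, Measure.restrict_apply_univ, smul_eq_mul,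
      ENNReal.inv_mul_cancel hP1ne0 hP1top]
  set R : ℝ := max M cstar with hR_def
  have hR0 : 0 ≤ R := le_trans hM.le (le_max_left _ _)
  have hcstar0 : 0 ≤ cstar := by nlinarith [hι.le, (Nat.cast_nonneg i : (0:ℝ) ≤ i)]
  have hν₀R : ν₀ (Iic R) = 1 := by
    rw [hν₀_def, Measure.smul_apply, Measure.restrict_apply measurableSet_Iic, smul_eq_mul]
    rw [inter_eq_self_of_subset_right (Iic_subset_Iic.2 (le_max_right _ _))]
    exact ENNReal.inv_mul_cancel hP0ne0 hP0top
  have hμIoiR : μ (Ioi R) = 0 := by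
    have : Ioi R ⊆ Ioi M := Ioi_subset_Ioi (le_max_left _ _)
    exact le_antisymm (le_trans (measure_mono this) hμM.le) zero_le
  have hν₁R : ν₁ (Iic R) = 1 := by
    rw [hν₁_def, Measure.smul_apply, Measure.restrict_apply measurableSet_Iic, smul_eq_mul]
    have hseteq : Iic R ∩ Ioi cstar = Ioc cstar R := by
      ext x
      simp only [mem_inter_iff, mem_Iic, mem_Ioi, mem_Ioc]
      tauto
    rw [hseteq]
    have hsplit : μ (Ioc cstar R) + μ (Ioi R) = μ (Ioi cstar) := by
      rw [← Ioc_union_Ioi_eq_Ioi (le_max_right M cstar),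
        measure_union _ measurableSet_Ioi]
      apply Set.disjoint_left.2
      intro x hx hx2
      exact absurd hx.2 (not_le.2 hx2)
    rw [hμIoiR, add_zero] at hsplit
    rw [hsplit]
    exact ENNReal.inv_mul_cancel hP1ne0 hP1top
  have hν₀0 : ν₀ (Iio 0) = 0 := by
    rw [hν₀_def, Measure.smul_apply, Measure.restrict_apply measurableSet_Iio, smul_eq_mul]
    have : μ (Iio 0 ∩ Iic cstar) = 0 :=
      le_antisymm (le_trans (measure_mono (inter_subset_left)) hμ0.le) zero_le
    rw [this, mul_zero]
  -- CDF shift condition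
  have hcdf : ∀ c : ℝ, cdfR ν₁ (c + ι) ≤ cdfR ν₀ c := by
    intro c
    have hν₁Iic : ∀ x : ℝ, ν₁ (Iic x) = P1⁻¹ * μ (Ioc cstar x) := by
      intro x
      rw [hν₁_def, Measure.smul_apply, Measure.restrict_apply measurableSet_Iic, smul_eq_mul]
      have hseteq : Iic x ∩ Ioi cstar = Ioc cstar x := by
        ext u
        simp only [mem_inter_iff, mem_Iic, mem_Ioi, mem_Ioc]
        tauto
      rw [hseteq]
    have hν₀Iic : ∀ x : ℝ, ν₀ (Iic x) = P0⁻¹ * μ (Iic (min x cstar)) := by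
      intro x
      rw [hν₀_def, Measure.smul_apply, Measure.restrict_apply measurableSet_Iic, smul_eq_mul,
        Iic_inter_Iic]
    rcases le_or_gt cstar c with hcc | hcc
    · -- F₀ c = 1
      have h1 : cdfR ν₀ c = 1 := by
        rw [cdfR, hν₀Iic, min_eq_right hcc, ← hP0_def,
          ENNReal.inv_mul_cancel hP0ne0 hP0top]
        simp
      rw [h1]
      exact cdfR_le_one (ν := ν₁) _
    rcases le_or_gt (c + ι) cstar with hcc2 | hcc2
    · have h1 : cdfR ν₁ (c + ι) = 0 := by
        rw [cdfR, hν₁Iic, Ioc_eq_empty (not_lt.2 hcc2), measure_empty, mul_zero]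
        simp
      rw [h1]
      exact cdfR_nonneg (ν := ν₀) _
    · -- middle case
      have hL : cdfR ν₁ (c + ι) ≤ (ρ^2/16) / p := by
        rw [cdfR, hν₁Iic]
        have hm : μ (Ioc cstar (c + ι)) ≤ ENNReal.ofReal (ρ^2/16) :=
          le_trans (measure_mono (Ioc_subset_Ioc_right (by linarith))) hGap
        have : P1⁻¹ * μ (Ioc cstar (c + ι)) ≤ P1⁻¹ * ENNReal.ofReal (ρ^2/16) :=
          mul_le_mul_right hm _
        have h2 := ENNReal.toReal_mono (by
          apply ENNReal.mul_ne_top (ENNReal.inv_ne_top.2 hP1ne0) ENNReal.ofReal_ne_top) this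
        simp only [ENNReal.toReal_mul, ENNReal.toReal_inv,
          ENNReal.toReal_ofReal (show (0:ℝ) ≤ ρ^2/16 by positivity)] at h2
        have h3 : (P1⁻¹ * μ (Ioc cstar (c+ι))).toReal
            = p⁻¹ * (μ (Ioc cstar (c+ι))).toReal := by
          rw [ENNReal.toReal_mul, ENNReal.toReal_inv, hp_def]
        rw [h3]
        calc p⁻¹ * (μ (Ioc cstar (c+ι))).toReal ≤ p⁻¹ * (ρ^2/16) := h2
          _ = (ρ^2/16) / p := inv_mul_eq_div _ _
      have hRt : (ρ/4) / (1 - p) ≤ cdfR ν₀ c := by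
        rw [cdfR, hν₀Iic, min_eq_left hcc.le]
        have hm : ENNReal.ofReal (ρ/4) ≤ μ (Iic c) :=
          le_trans hB (measure_mono (Iic_subset_Iic.2 (by linarith)))
        have h1 : P0⁻¹ * ENNReal.ofReal (ρ/4) ≤ P0⁻¹ * μ (Iic c) :=
          mul_le_mul_right hm _
        have h2 := ENNReal.toReal_mono (by
          apply ENNReal.mul_ne_top (ENNReal.inv_ne_top.2 hP0ne0) (measure_ne_top μ _)) h1
        simp only [ENNReal.toReal_mul, ENNReal.toReal_inv,
          ENNReal.toReal_ofReal (show (0:ℝ) ≤ ρ/4 by positivity), hq_toReal] at h2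
        have h3 : (P0⁻¹ * μ (Iic c)).toReal = (1-p)⁻¹ * (μ (Iic c)).toReal := by
          rw [ENNReal.toReal_mul, ENNReal.toReal_inv, hq_toReal]
        rw [h3]
        calc (ρ/4) / (1-p) = (1-p)⁻¹ * (ρ/4) := (inv_mul_eq_div _ _).symm
          _ ≤ (1-p)⁻¹ * (μ (Iic c)).toReal := h2
      have hreal : (ρ^2/16) / p ≤ (ρ/4) / (1 - p) := by
        have hp0 : 0 < p := by linarith
        have h1p : 0 < 1 - p := by linarith
        rw [div_le_div_iff₀ hp0 h1p]
        nlinarith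
      linarith
  -- assemble
  refine ⟨p, by linarith, by linarith, qtl ν₀, fun t => qtl ν₁ t - qtl ν₀ t,
    qtl_measurable (ν := ν₀) hR0 hν₀R,
    ((qtl_measurable (ν := ν₁) hR0 hν₁R).sub (qtl_measurable (ν := ν₀) hR0 hν₀R)), ?_, ?_⟩
  · intro t ht
    have := qtl_gap (ν₀ := ν₀) (ν₁ := ν₁) hR0 hν₀R hν₁R hν₀0 hcdf ht.1 ht.2.le
    simp only [← hι_def] at *
    linarith
  · have hmap₀ : Measure.map (qtl ν₀) unif01 = ν₀ := map_qtl hR0 hν₀R hν₀0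
    have hfun : (fun t => qtl ν₀ t + (qtl ν₁ t - qtl ν₀ t)) = qtl ν₁ := by
      funext t; ring
    rw [hfun]
    have hν₁0 : ν₁ (Iio 0) = 0 := by
      rw [hν₁_def, Measure.smul_apply, Measure.restrict_apply measurableSet_Iio, smul_eq_mul]
      have : μ (Iio 0 ∩ Ioi cstar) = 0 :=
        le_antisymm (le_trans (measure_mono (inter_subset_left)) hμ0.le) zero_le
      rw [this, mul_zero]
    have hmap₁ : Measure.map (qtl ν₁) unif01 = ν₁ := map_qtl hR0 hν₁R hν₁0
    rw [hmap₀, hmap₁, hofq, hofp, hν₀_def, hν₁_def, smul_smul, smul_smul,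
      ENNReal.mul_inv_cancel hP0ne0 hP0top, ENNReal.mul_inv_cancel hP1ne0 hP1top,
      one_smul, one_smul, ← compl_Iic,
      Measure.restrict_add_restrict_compl measurableSet_Iic]

/-- For all `γ > 0`, `0 < ρ < 1`, `M > 0` there are
`0 < p₋ < p₊ < 1` and `ι > 0` such that every random variable `X` with `0 ≤ X ≤ M` a.s.
which is anti-concentrated with gap `γ` and remainder `ρ` admits a `p`-Bernoulli
decomposition with `p₋ ≤ p ≤ p₊` and `Z(t) ≥ ι` for all `t ∈ (0,1)`. -/
theorem stmt_2 (γ ρ M : ℝ) (hγ : 0 < γ) (hρ0 : 0 < ρ) (hρ1 : ρ < 1) (hM : 0 < M) :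
    ∃ pm pp ι : ℝ, 0 < pm ∧ pm < pp ∧ pp < 1 ∧ 0 < ι ∧
      ∀ (Ω : Type) (_ : MeasurableSpace Ω) (P : Measure Ω), IsProbabilityMeasure P →
        ∀ (X : Ω → ℝ), Measurable X →
        (∀ᵐ ω ∂P, 0 ≤ X ω ∧ X ω ≤ M) →
        (∀ t ∈ Set.Icc (0:ℝ) M, ENNReal.ofReal ρ ≤ P {ω | γ / 2 < |X ω - t|}) →
        ∃ p : ℝ, pm ≤ p ∧ p ≤ pp ∧
          ∃ Y Z : ℝ → ℝ, (∀ t ∈ Set.Ioo (0:ℝ) 1, ι ≤ Z t) ∧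
            IsBernoulliDecomp P X p Y Z := by
  refine ⟨ρ/2, 1 - ρ/8, γ*ρ^2/128, by positivity, by linarith, by linarith, by positivity, ?_⟩
  intro Ω mΩ P hP X hX hae hanti
  set μ : Measure ℝ := Measure.map X P with hμ_def
  have hμprob : IsProbabilityMeasure μ := Measure.isProbabilityMeasure_map hX.aemeasurable
  have hae0 : P {ω | ¬ (0 ≤ X ω ∧ X ω ≤ M)} = 0 := ae_iff.1 hae
  have hμ0 : μ (Iio 0) = 0 := by
    rw [hμ_def, Measure.map_apply hX measurableSet_Iio]
    apply measure_mono_null _ hae0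
    intro ω hω
    simp only [mem_preimage, mem_Iio] at hω
    simp only [mem_setOf_eq, not_and_or, not_le]
    left; exact hω
  have hμM : μ (Ioi M) = 0 := by
    rw [hμ_def, Measure.map_apply hX measurableSet_Ioi]
    apply measure_mono_null _ hae0
    intro ω hω
    simp only [mem_preimage, mem_Ioi] at hω
    simp only [mem_setOf_eq, not_and_or, not_le]
    right; exact hω
  have hwin : ∀ z ∈ Icc (0:ℝ) M, μ (Icc (z - γ/2) (z + γ/2)) ≤ ENNReal.ofReal (1 - ρ) := by
    intro z hz
    have hA : MeasurableSet (X ⁻¹' (Icc (z - γ/2) (z + γ/2))) := hX measurableSet_Icc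
    have hcompl : {ω | γ/2 < |X ω - z|} = (X ⁻¹' (Icc (z - γ/2) (z + γ/2)))ᶜ := by
      ext ω
      simp only [mem_setOf_eq, mem_compl_iff, mem_preimage, mem_Icc]
      rw [← not_le, abs_sub_le_iff]
      constructor
      · intro h h2; exact h ⟨by linarith [h2.2], by linarith [h2.1]⟩
      · intro h h2; exact h ⟨by linarith [h2.2], by linarith [h2.1]⟩
    have hge := hanti z hz
    rw [hcompl] at hge
    have hsum := measure_add_measure_compl (μ := P) hA
    rw [measure_univ] at hsum
    have heq : P (X ⁻¹' (Icc (z - γ/2) (z + γ/2)))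
        = 1 - P ((X ⁻¹' (Icc (z - γ/2) (z + γ/2)))ᶜ) :=
      ENNReal.eq_sub_of_add_eq (measure_ne_top P _) hsum
    have hμA : μ (Icc (z - γ/2) (z + γ/2)) = P (X ⁻¹' (Icc (z - γ/2) (z + γ/2))) := by
      rw [hμ_def, Measure.map_apply hX measurableSet_Icc]
    rw [hμA, heq]
    calc 1 - P ((X ⁻¹' (Icc (z - γ/2) (z + γ/2)))ᶜ) ≤ 1 - ENNReal.ofReal ρ :=
          tsub_le_tsub_left hge 1
      _ = ENNReal.ofReal (1 - ρ) := by
          rw [ENNReal.ofReal_sub 1 hρ0.le, ENNReal.ofReal_one]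
  obtain ⟨p, hp1, hp2, Y, Z, hYm, hZm, hZι, hmix⟩ :=
    main_decomp γ ρ M hγ hρ0 hρ1 hM μ hμ0 hμM hwin
  refine ⟨p, hp1, hp2, Y, Z, hZι, hYm, hZm, ?_⟩
  have hh : Measurable (fun q : ℝ × ℝ => Y q.1 + Z q.1 * q.2) :=
    (hYm.comp measurable_fst).add ((hZm.comp measurable_fst).mul measurable_snd)
  rw [bernoulliLaw, Measure.prod_add, prod_smul_right', prod_smul_right',
    Measure.map_add _ _ hh, Measure.map_smul, Measure.map_smul,
    Measure.prod_dirac, Measure.prod_dirac,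
    Measure.map_map hh (show Measurable (fun x : ℝ => (x, (0:ℝ))) from
      measurable_id.prodMk measurable_const),
    Measure.map_map hh (show Measurable (fun x : ℝ => (x, (1:ℝ))) from
      measurable_id.prodMk measurable_const)]
  have e0 : ((fun q : ℝ × ℝ => Y q.1 + Z q.1 * q.2) ∘ (fun x : ℝ => (x, (0:ℝ)))) = Y := by
    funext t; simp
  have e1 : ((fun q : ℝ × ℝ => Y q.1 + Z q.1 * q.2) ∘ (fun x : ℝ => (x, (1:ℝ))))
      = fun t => Y t + Z t := by
    funext t; simp
  rw [e0, e1, hmix]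
end

section
/- Let X be a real-valued random variable and define G(t) = inf{u ∈ ℝ : P[X ≤ u] ≥ t} for t ∈ (0,1). Suppose a < b are real numbers satisfying P[X ∈ [a,b]] < (1/2)·min{P[X ≤ (a+b)/2], P[X ≥ (a+b)/2]}, and set 1 − p = P[X ≤ (a+b)/2]. Then for every t ∈ (0,1): G(1 − p + p·t) − G((1 − p)·t) ≥ (b − a)/2. -/
open MeasureTheory ProbabilityTheory Filter

/-- Let `G` be the generalized inverse c.d.f. of `X`. If
`P[X ∈ [a,b]] < (1/2)·min{P[X ≤ (a+b)/2], P[X ≥ (a+b)/2]}` and `1 − p = P[X ≤ (a+b)/2]`,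
then `G(1−p+p·t) − G((1−p)·t) ≥ (b−a)/2` for every `t ∈ (0,1)`. -/
theorem stmt_4 {Ω : Type*} [MeasurableSpace Ω] (P : Measure Ω) [IsProbabilityMeasure P]
    (X : Ω → ℝ) (hX : Measurable X) (a b : ℝ) (hab : a < b)
    (G : ℝ → ℝ) (hG : ∀ t, G t = sInf {u : ℝ | t ≤ (P {ω | X ω ≤ u}).toReal})
    (hsmall : (P {ω | X ω ∈ Set.Icc a b}).toReal <
      (1 / 2) * min ((P {ω | X ω ≤ (a + b) / 2}).toReal)
        ((P {ω | (a + b) / 2 ≤ X ω}).toReal))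
    (p : ℝ) (hp : 1 - p = (P {ω | X ω ≤ (a + b) / 2}).toReal) :
    ∀ t ∈ Set.Ioo (0:ℝ) 1, (b - a) / 2 ≤ G (1 - p + p * t) - G ((1 - p) * t) := by
  set m : ℝ := (a + b) / 2 with hm
  set μ : Measure ℝ := P.map X with hμ
  have hprob : IsProbabilityMeasure μ := Measure.isProbabilityMeasure_map hX.aemeasurable
  set F : ℝ → ℝ := fun u => (P {ω | X ω ≤ u}).toReal with hFdef
  have hFcdf : ∀ u, F u = cdf μ u := by
    intro u
    rw [cdf_eq_real, measureReal_def, hμ, Measure.map_apply hX measurableSet_Iic]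
    rfl
  have hFmono : Monotone F := by
    intro u v huv
    rw [hFcdf, hFcdf]
    exact (cdf μ).mono huv
  -- real-valued measure helper facts
  have hfin : ∀ s : Set Ω, P s ≠ ⊤ := fun s => measure_ne_top P s
  have hsub : ∀ s u : Set Ω, s ⊆ u → (P s).toReal ≤ (P u).toReal := by
    intro s u h
    exact ENNReal.toReal_mono (hfin u) (measure_mono h)
  have hunion : ∀ s u : Set Ω, (P (s ∪ u)).toReal ≤ (P s).toReal + (P u).toReal := by
    intro s u
    rw [← ENNReal.toReal_add (hfin s) (hfin u)]
    exact ENNReal.toReal_mono (by simp [hfin]) (measure_union_le s u)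
  set I : ℝ := (P {ω | X ω ∈ Set.Icc a b}).toReal with hI
  set R : ℝ := (P {ω | m ≤ X ω}).toReal with hR
  set q : ℝ := 1 - p with hq
  have hqF : q = F m := hp
  have ham : a ≤ m := by rw [hm]; linarith
  have hmb : m ≤ b := by rw [hm]; linarith
  -- positivity of q and R
  have hI0 : 0 ≤ I := ENNReal.toReal_nonneg
  have hmin : I < (1/2) * min q R := by rw [← hp] at hsmall; exact hsmall
  have hq0 : 0 < q := by
    have := min_le_left q R; nlinarith [hmin, hI0]
  have hR0 : 0 < R := by
    have := min_le_right q R; nlinarith [hmin, hI0]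
  have hIq : I < q / 2 := by
    have := min_le_left q R; nlinarith [hmin]
  have hIR : I < R / 2 := by
    have := min_le_right q R; nlinarith [hmin]
  -- complement facts
  have hcompl : ∀ u : ℝ, (P {ω | u < X ω}).toReal = 1 - F u := by
    intro u
    have hmeas : MeasurableSet {ω | X ω ≤ u} := hX measurableSet_Iic
    have : {ω | u < X ω} = {ω | X ω ≤ u}ᶜ := by ext ω; simp [not_le]
    rw [this, measure_compl hmeas (hfin _), measure_univ,
      ENNReal.toReal_sub_of_le prob_le_one ENNReal.one_ne_top]
    simp [hFdef]
  -- p = P[X > m] type bounds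
  have hRp : R ≤ (1 - F m) + I := by
    have hsubset : {ω | m ≤ X ω} ⊆ {ω | m < X ω} ∪ {ω | X ω ∈ Set.Icc a b} := by
      intro ω hω
      have hω' : m ≤ X ω := hω
      rcases lt_or_eq_of_le hω' with h | h
      · exact Or.inl h
      · exact Or.inr ⟨by rw [← h]; exact ham, by rw [← h]; exact hmb⟩
    calc R ≤ (P ({ω | m < X ω} ∪ {ω | X ω ∈ Set.Icc a b})).toReal := hsub _ _ hsubset
      _ ≤ (P {ω | m < X ω}).toReal + I := hunion _ _
      _ = (1 - F m) + I := by rw [hcompl]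
  have hpeq : 1 - F m = p := by rw [← hqF]; ring
  have hp0 : 0 < p := by rw [← hpeq]; nlinarith [hRp, hIR]
  have hpR : p ≤ R := by
    rw [← hpeq, ← hcompl m]
    exact hsub _ _ (fun ω (h : m < X ω) => le_of_lt h)
  -- F b < q + p/2
  have hFb : F b < q + p / 2 := by
    have hsubset : {ω | m ≤ X ω} ⊆ {ω | b < X ω} ∪ {ω | X ω ∈ Set.Icc a b} := by
      intro ω hω
      rcases lt_or_ge b (X ω) with h | h
      · exact Or.inl h
      · exact Or.inr ⟨le_trans ham hω, h⟩
    have h1 : R ≤ (1 - F b) + I := by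
      calc R ≤ (P ({ω | b < X ω} ∪ {ω | X ω ∈ Set.Icc a b})).toReal := hsub _ _ hsubset
        _ ≤ (P {ω | b < X ω}).toReal + I := hunion _ _
        _ = (1 - F b) + I := by rw [hcompl]
    nlinarith [hIR, hpR]
  -- F a > q/2
  have hFa : q / 2 < F a := by
    have hsubset : {ω | X ω ≤ m} ⊆ {ω | X ω ≤ a} ∪ {ω | X ω ∈ Set.Icc a b} := by
      intro ω hω
      rcases le_or_gt (X ω) a with h | h
      · exact Or.inl h
      · exact Or.inr ⟨le_of_lt h, le_trans hω hmb⟩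
    have h1 : F m ≤ F a + I := by
      calc F m ≤ (P ({ω | X ω ≤ a} ∪ {ω | X ω ∈ Set.Icc a b})).toReal := hsub _ _ hsubset
        _ ≤ F a + I := hunion _ _
    rw [← hqF] at h1; linarith
  -- sInf facts
  have hbdd : ∀ t' : ℝ, 0 < t' → BddBelow {u : ℝ | t' ≤ F u} := by
    intro t' ht'
    have := tendsto_cdf_atBot μ
    have h2 : ∀ᶠ u in atBot, cdf μ u < t' := this.eventually_lt_const ht'
    obtain ⟨u0, hu0⟩ := h2.exists
    refine ⟨u0, fun u hu => ?_⟩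
    by_contra h
    push_neg at h
    have : F u ≤ F u0 := hFmono h.le
    rw [hFcdf u0] at this
    exact absurd (le_trans hu this) (not_le.mpr hu0)
  have hne : ∀ t' : ℝ, t' < 1 → Set.Nonempty {u : ℝ | t' ≤ F u} := by
    intro t' ht'
    have := tendsto_cdf_atTop μ
    have h2 : ∀ᶠ u in atTop, t' < cdf μ u := this.eventually_const_lt ht'
    obtain ⟨u0, hu0⟩ := h2.exists
    exact ⟨u0, by rw [Set.mem_setOf_eq, hFcdf]; exact hu0.le⟩
  have hGle : ∀ t' c : ℝ, 0 < t' → t' ≤ F c → G t' ≤ c := by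
    intro t' c ht' hc
    rw [hG]
    exact csInf_le (hbdd t' ht') hc
  have hGge : ∀ t' c : ℝ, t' < 1 → (∀ u, t' ≤ F u → c ≤ u) → c ≤ G t' := by
    intro t' c ht' h
    rw [hG]
    exact le_csInf (hne t' ht') h
  intro t ⟨ht0, ht1⟩
  have hqpt1 : q + p * t < 1 := by nlinarith
  have hqpt0 : 0 < q * t := mul_pos hq0 ht0
  have hkey1 : q + p * t ≤ G (1 - p + p * t) ∨ True := Or.inr trivial
  rcases le_or_gt t (1/2) with hhalf | hhalf
  · -- t ≤ 1/2 : G(qt) ≤ a, G(q+pt) ≥ m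
    have h1 : G ((1 - p) * t) ≤ a := by
      apply hGle _ _ (by rw [← hq]; exact hqpt0)
      have : (1 - p) * t ≤ q / 2 := by rw [← hq]; nlinarith
      linarith [hFa]
    have h2 : m ≤ G (1 - p + p * t) := by
      apply hGge _ _ (by rw [show (1:ℝ) - p + p * t = q + p * t from by rw [hq]]; exact hqpt1)
      intro u hu
      by_contra h
      push_neg at h
      have : F u ≤ F m := hFmono h.le
      rw [← hqF] at this
      have hpt : 0 < p * t := mul_pos hp0 ht0
      have : 1 - p + p * t ≤ q := le_trans hu this
      rw [hq] at this
      linarith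
    have : m - a = (b - a) / 2 := by rw [hm]; ring
    linarith
  · -- t > 1/2 : G(qt) ≤ m, G(q+pt) ≥ b
    have h1 : G ((1 - p) * t) ≤ m := by
      apply hGle _ _ (by rw [← hq]; exact hqpt0)
      calc (1 - p) * t = q * t := by rw [hq]
        _ ≤ q := mul_le_of_le_one_right hq0.le ht1.le
        _ = F m := hqF
    have h2 : b ≤ G (1 - p + p * t) := by
      apply hGge _ _ (by rw [show (1:ℝ) - p + p * t = q + p * t from by rw [hq]]; exact hqpt1)
      intro u hu
      by_contra h
      push_neg at h
      have hle : F u ≤ F b := hFmono h.le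
      have h5 : 1 - p + p * t ≤ F b := le_trans hu hle
      have hpt : p * (1/2) ≤ p * t := mul_le_mul_of_nonneg_left hhalf.le hp0.le
      linarith [h5, hFb, hq, hpt]
    have : b - m = (b - a) / 2 := by rw [hm]; ring
    linarith
end

section
/- Let N ≥ 1, let q₁,…,q_N be real numbers, let ψ ⊆ {1,…,N}, let k ∈ {0,…,N}, and let j ≠ j' be elements of {1,…,N} with j ∉ ψ and j' ∉ ψ. Define h̃_j = Σ over subsets η ⊆ {1,…,N} with |η| = k, j ∉ η and j' ∈ η of (1/(|ψ\η| + 1))·Π_{ℓ∈η} q_ℓ, and h̃_{j'} = Σ over subsets η with |η| = k, j' ∉ η and j ∈ η of (1/(|ψ\η| + 1))·Π_{ℓ∈η} q_ℓ. Then q_j·h̃_j = q_{j'}·h̃_{j'}. -/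
/-!
The transposition `σ = (j j')` maps the sets `η` with `j ∉ η ∋ j'` bijectively onto those with
`j' ∉ η ∋ j`, preserving `|η|`. It fixes `ψ` pointwise, so the weight of `ψ \ η` is unchanged,
and `q_j · ∏_{η} q = q_{j'} · ∏_{σ η} q` because `σ η` just trades `j'` for `j`.
-/

open Finset

section SwapTransfer

variable {α : Type*} [DecidableEq α] {j j' : α}

theorem Finset.sdiff_map_swap_of_notMem {ψ : Finset α} (hj : j ∉ ψ) (hj' : j' ∉ ψ)
    (η : Finset α) : ψ \ η.map (Equiv.swap j j').toEmbedding = ψ \ η := by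
  ext x
  simp only [mem_sdiff, mem_map_equiv, Equiv.symm_swap, and_congr_right_iff]
  intro hx
  rw [Equiv.swap_apply_of_ne_of_ne (ne_of_mem_of_not_mem hx hj) (ne_of_mem_of_not_mem hx hj')]

theorem Finset.mul_prod_eq_mul_prod_map_swap {R : Type*} [CommMonoid R] (q : α → R)
    {η : Finset α} (hj : j ∉ η) (hj' : j' ∈ η) :
    q j * ∏ ℓ ∈ η, q ℓ = q j' * ∏ ℓ ∈ η.map (Equiv.swap j j').toEmbedding, q ℓ := by
  have hfix : ∀ ℓ ∈ η.erase j', q (Equiv.swap j j' ℓ) = q ℓ := fun ℓ hℓ => by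
    rw [Equiv.swap_apply_of_ne_of_ne (ne_of_mem_of_not_mem (mem_of_mem_erase hℓ) hj)
      (ne_of_mem_erase hℓ)]
  rw [← mul_prod_erase η q hj', prod_map, ← mul_prod_erase η _ hj']
  simp only [Equiv.coe_toEmbedding, Equiv.swap_apply_right]
  rw [prod_congr rfl hfix, mul_left_comm]

variable [Fintype α]

theorem Finset.mul_sum_weighted_prod_swap {R : Type*} [CommSemiring R] (q : α → R)
    (w : Finset α → R) {ψ : Finset α} (hj : j ∉ ψ) (hj' : j' ∉ ψ) (k : ℕ) :
    q j * ∑ η ∈ univ.filter (fun η : Finset α => η.card = k ∧ j ∉ η ∧ j' ∈ η),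
        w (ψ \ η) * ∏ ℓ ∈ η, q ℓ
      = q j' * ∑ η ∈ univ.filter (fun η : Finset α => η.card = k ∧ j' ∉ η ∧ j ∈ η),
        w (ψ \ η) * ∏ ℓ ∈ η, q ℓ := by
  rw [mul_sum, mul_sum]
  refine sum_equiv (Equiv.finsetCongr (Equiv.swap j j')) (fun η => ?_) (fun η hη => ?_)
  · simp [Equiv.finsetCongr_apply, mem_map_equiv]
  · obtain ⟨-, hjη, hj'η⟩ := (mem_filter.1 hη).2
    rw [Equiv.finsetCongr_apply, sdiff_map_swap_of_notMem hj hj', mul_left_comm,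
      mul_prod_eq_mul_prod_map_swap q hjη hj'η, mul_left_comm]

end SwapTransfer

theorem stmt_8_general (N : ℕ) (q : Fin N → ℝ) (ψ : Finset (Fin N))
    (k : ℕ) (j j' : Fin N) (hj : j ∉ ψ) (hj' : j' ∉ ψ) :
    q j * ∑ η ∈ Finset.univ.filter
        (fun η : Finset (Fin N) => η.card = k ∧ j ∉ η ∧ j' ∈ η),
        (1 / (((ψ \ η).card : ℝ) + 1)) * ∏ ℓ ∈ η, q ℓ
      = q j' * ∑ η ∈ Finset.univ.filter
        (fun η : Finset (Fin N) => η.card = k ∧ j' ∉ η ∧ j ∈ η),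
        (1 / (((ψ \ η).card : ℝ) + 1)) * ∏ ℓ ∈ η, q ℓ :=
  mul_sum_weighted_prod_swap q (fun s => 1 / ((s.card : ℝ) + 1)) hj hj' k

/-- With `h̃_j` the sum over `η ⊆ {1,…,N}` with `|η| = k`, `j ∉ η`, `j' ∈ η`
of `(1/(|ψ\η|+1))·Π_{ℓ∈η} q_ℓ` (and `h̃_{j'}` defined symmetrically), one has
`q_j·h̃_j = q_{j'}·h̃_{j'}`. -/
theorem stmt_8 (N : ℕ) (hN : 1 ≤ N) (q : Fin N → ℝ) (ψ : Finset (Fin N))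
    (k : ℕ) (hk : k ≤ N) (j j' : Fin N) (hjj' : j ≠ j') (hj : j ∉ ψ) (hj' : j' ∉ ψ) :
    q j * ∑ η ∈ Finset.univ.filter
        (fun η : Finset (Fin N) => η.card = k ∧ j ∉ η ∧ j' ∈ η),
        (1 / (((ψ \ η).card : ℝ) + 1)) * ∏ ℓ ∈ η, q ℓ
      = q j' * ∑ η ∈ Finset.univ.filter
        (fun η : Finset (Fin N) => η.card = k ∧ j' ∉ η ∧ j ∈ η),
        (1 / (((ψ \ η).card : ℝ) + 1)) * ∏ ℓ ∈ η, q ℓ :=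
  stmt_8_general N q ψ k j j' hj hj'
end

section
/- Let V : ℤ² → ℝ, let Λ ⊆ ℤ² be a square of side length L, let Ē, E ∈ ℝ and α > β > 0. Suppose H_Λ − Ē·I is invertible with |(H_Λ − Ē·I)⁻¹(x,y)| ≤ e^{α − β|x−y|} for all x, y ∈ Λ, and suppose |E − Ē| ≤ 1/(2L²e^{α}). Then H_Λ − E·I is invertible and |(H_Λ − E·I)⁻¹(x,y)| ≤ 2e^{α − β|x−y|} for all x, y ∈ Λ. -/
open MeasureTheory ProbabilityTheory
open scoped Classical

noncomputable section

/-- Euclidean distance between two points of `ℤ²`. -/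
def eudist (x y : ℤ × ℤ) : ℝ :=
  Real.sqrt ((((x.1 - y.1 : ℤ) : ℝ)) ^ 2 + (((x.2 - y.2 : ℤ) : ℝ)) ^ 2)

/-- The square `([a, a+L−1] × [b, b+L−1]) ∩ ℤ²` of side length `L`. -/
def sqZ (a b : ℤ) (L : ℕ) : Finset (ℤ × ℤ) :=
  Finset.Icc a (a + L - 1) ×ˢ Finset.Icc b (b + L - 1)

/-- The truncated Hamiltonian `H_Λ`: the `Λ×Λ` matrix with diagonal entries `4 + V x`,
entries `−1` between nearest neighbours (`‖x−y‖₁ = 1`) and `0` otherwise. -/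
def Ham (V : ℤ × ℤ → ℝ) (Λ : Finset (ℤ × ℤ)) : Matrix Λ Λ ℝ :=
  fun x y =>
    if (x : ℤ × ℤ) = (y : ℤ × ℤ) then 4 + V x
    else if ((x : ℤ × ℤ).1 - (y : ℤ × ℤ).1).natAbs + ((x : ℤ × ℤ).2 - (y : ℤ × ℤ).2).natAbs = 1
      then -1 else 0

/-- Entries of a `Λ×Λ` matrix, extended by `0` outside `Λ`. -/
def entry {Λ : Finset (ℤ × ℤ)} (A : Matrix Λ Λ ℝ) (x y : ℤ × ℤ) : ℝ :=
  if hx : x ∈ Λ then (if hy : y ∈ Λ then A ⟨x, hx⟩ ⟨y, hy⟩ else 0) else 0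

/-- Extension by zero of a potential defined on `Λ`. -/
def extV (Λ : Finset (ℤ × ℤ)) (V : Λ → ℝ) : ℤ × ℤ → ℝ :=
  fun n => if h : n ∈ Λ then V ⟨n, h⟩ else 0

/-- `ψ` satisfies `Hψ = Eψ` (with potential `V`) at every site of `S`. -/
def EigOn (V : ℤ × ℤ → ℝ) (E : ℝ) (ψ : ℤ × ℤ → ℝ) (S : Set (ℤ × ℤ)) : Prop :=
  ∀ n ∈ S, (4 + V n) * ψ n - ψ (n.1 + 1, n.2) - ψ (n.1 - 1, n.2)
      - ψ (n.1, n.2 + 1) - ψ (n.1, n.2 - 1) = E * ψ n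

/-- The tilted rectangle `{n : a₁ ≤ s(n) ≤ a₂, b₁ ≤ t(n) ≤ b₂}` in the tilted
coordinates `s = x + y`, `t = x − y`. -/
def tRect (a₁ a₂ b₁ b₂ : ℤ) : Set (ℤ × ℤ) :=
  {n | a₁ ≤ n.1 + n.2 ∧ n.1 + n.2 ≤ a₂ ∧ b₁ ≤ n.1 - n.2 ∧ n.1 - n.2 ≤ b₂}

/-- The tilted rectangle as a finite set. -/
def tRectF (a₁ a₂ b₁ b₂ : ℤ) : Finset (ℤ × ℤ) :=
  ((Finset.Icc (-(|a₁| + |a₂| + |b₁| + |b₂|)) (|a₁| + |a₂| + |b₁| + |b₂|)) ×ˢ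
    (Finset.Icc (-(|a₁| + |a₂| + |b₁| + |b₂|)) (|a₁| + |a₂| + |b₁| + |b₂|))).filter
    (fun n => a₁ ≤ n.1 + n.2 ∧ n.1 + n.2 ≤ a₂ ∧ b₁ ≤ n.1 - n.2 ∧ n.1 - n.2 ≤ b₂)

/-- `F` is `ε`-sparse in `R`: along every diagonal (in either tilted direction),
`F` occupies at most an `ε` fraction of `R`. -/
def SparseIn (ε : ℝ) (F R : Set (ℤ × ℤ)) : Prop :=
  ∀ k : ℤ,
    ((F ∩ R ∩ {n | n.1 + n.2 = k}).ncard : ℝ) ≤ ε * ((R ∩ {n | n.1 + n.2 = k}).ncard : ℝ) ∧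
    ((F ∩ R ∩ {n | n.1 - n.2 = k}).ncard : ℝ) ≤ ε * ((R ∩ {n | n.1 - n.2 = k}).ncard : ℝ)

/-- A tilted square: a tilted rectangle with equal side lengths. -/
def IsTiltedSquare (Q : Set (ℤ × ℤ)) : Prop :=
  ∃ (c d : ℤ) (a : ℕ), 0 < a ∧ Q = tRect c (c + a - 1) d (d + a - 1)

/-- `F` is `ε`-regular in `Λ`: any finite disjoint collection of tilted squares inside `Λ`,
in none of which `F` is `ε`-sparse, covers at most an `ε` fraction of `Λ`. -/
def RegularIn (ε : ℝ) (F : Set (ℤ × ℤ)) (Λ : Set (ℤ × ℤ)) : Prop :=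
  ∀ (m : ℕ) (Q : Fin m → Set (ℤ × ℤ)),
    (∀ i, IsTiltedSquare (Q i)) → (∀ i, Q i ⊆ Λ) →
    Pairwise (Function.onFun Disjoint Q) →
    (∀ i, ¬ SparseIn ε F (Q i)) →
    ((⋃ i, Q i).ncard : ℝ) ≤ ε * (Λ.ncard : ℝ)

/-- The lattice points of the axis-parallel square concentric with the square
`sqZ a b L` whose area is `c` times that of `sqZ a b L`. -/
def scaledSq (a b : ℤ) (L : ℕ) (c : ℝ) : Set (ℤ × ℤ) :=
  {n | |(n.1 : ℝ) - ((a : ℝ) + ((L : ℝ) - 1) / 2)| ≤ Real.sqrt c * L / 2 ∧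
       |(n.2 : ℝ) - ((b : ℝ) + ((L : ℝ) - 1) / 2)| ≤ Real.sqrt c * L / 2}

/-- The lattice points of the tilted square concentric with the tilted square
`tRect c (c+a−1) d (d+a−1)` whose area is `r` times as large. -/
def scaledTSq (c d : ℤ) (a : ℕ) (r : ℝ) : Set (ℤ × ℤ) :=
  {n | |((n.1 + n.2 : ℤ) : ℝ) - ((c : ℝ) + ((a : ℝ) - 1) / 2)| ≤ Real.sqrt r * a / 2 ∧
       |((n.1 - n.2 : ℤ) : ℝ) - ((d : ℝ) + ((a : ℝ) - 1) / 2)| ≤ Real.sqrt r * a / 2}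

/-- The scaled tilted square as a finite set. -/
def scaledTSqF (c d : ℤ) (a : ℕ) (r : ℝ) : Finset (ℤ × ℤ) :=
  (tRectF (c - ⌈Real.sqrt r * a⌉ - a) (c + a + ⌈Real.sqrt r * a⌉)
      (d - ⌈Real.sqrt r * a⌉ - a) (d + a + ⌈Real.sqrt r * a⌉)).filter
    (fun n => n ∈ scaledTSq c d a r)

/-- The boundary of `Λ'` inside `Λ`: pairs `(u,v)` with `u ∈ Λ'`, `v ∈ Λ \ Λ'`,
`‖u − v‖₁ = 1`. -/
def bdry (Λ Λ' : Finset (ℤ × ℤ)) : Finset ((ℤ × ℤ) × (ℤ × ℤ)) :=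
  (Λ' ×ˢ (Λ \ Λ')).filter
    (fun uv => (uv.1.1 - uv.2.1).natAbs + (uv.1.2 - uv.2.2).natAbs = 1)



attribute [local instance] Matrix.linftyOpNormedAddCommGroup Matrix.linftyOpNormedRing
  Matrix.linftyOpNormedSpace

private lemma eudist_nonneg' (x y : ℤ × ℤ) : 0 ≤ eudist x y := Real.sqrt_nonneg _

private lemma eudist_eq_cabs (u v : ℤ × ℤ) :
    eudist u v = ‖((⟨(u.1 : ℝ), (u.2 : ℝ)⟩ : ℂ) - (⟨(v.1 : ℝ), (v.2 : ℝ)⟩ : ℂ))‖ := by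
  have h : ((⟨(u.1 : ℝ), (u.2 : ℝ)⟩ : ℂ) - (⟨(v.1 : ℝ), (v.2 : ℝ)⟩ : ℂ))
      = (⟨((u.1 - v.1 : ℤ) : ℝ), ((u.2 - v.2 : ℤ) : ℝ)⟩ : ℂ) := by
    apply Complex.ext <;> simp
  rw [h, Complex.norm_def, Complex.normSq_mk, eudist]
  congr 1
  ring

private lemma eudist_triangle' (x y z : ℤ × ℤ) : eudist x z ≤ eudist x y + eudist y z := by
  rw [eudist_eq_cabs, eudist_eq_cabs, eudist_eq_cabs]
  exact norm_sub_le_norm_sub_add_norm_sub _ _ _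

set_option maxHeartbeats 1000000 in
set_option synthInstance.maxHeartbeats 400000 in
/-- stability of resolvent bounds in energy. If
`|(H_Λ − Ē)⁻¹(x,y)| ≤ e^{α − β|x−y|}` on a square `Λ` of side length `L` and
`|E − Ē| ≤ 1/(2L²e^α)`, then `H_Λ − E` is invertible with
`|(H_Λ − E)⁻¹(x,y)| ≤ 2e^{α − β|x−y|}`. -/
theorem stmt_11 (V : ℤ × ℤ → ℝ) (a b : ℤ) (L : ℕ) (hL : 0 < L) (Ebar E α β : ℝ)
    (hβ : 0 < β) (hαβ : β < α)
    (hinv : IsUnit (Ham V (sqZ a b L) - Ebar • (1 : Matrix (sqZ a b L) (sqZ a b L) ℝ)).det)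
    (hbound : ∀ x y : sqZ a b L,
      |((Ham V (sqZ a b L) - Ebar • 1)⁻¹) x y| ≤ Real.exp (α - β * eudist x.1 y.1))
    (hE : |E - Ebar| ≤ 1 / (2 * (L : ℝ) ^ 2 * Real.exp α)) :
    IsUnit (Ham V (sqZ a b L) - E • (1 : Matrix (sqZ a b L) (sqZ a b L) ℝ)).det ∧
      ∀ x y : sqZ a b L,
        |((Ham V (sqZ a b L) - E • 1)⁻¹) x y| ≤ 2 * Real.exp (α - β * eudist x.1 y.1) := by
  classical
  set Λ : Finset (ℤ × ℤ) := sqZ a b L with hΛdef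
  set A : Matrix Λ Λ ℝ := Ham V Λ - Ebar • 1 with hAdef
  set G : Matrix Λ Λ ℝ := A⁻¹ with hGdef
  have hAG : A * G = 1 := Matrix.mul_nonsing_inv A hinv
  set δ : ℝ := E - Ebar with hδdef
  set N : ℝ := (L : ℝ) ^ 2 with hNdef
  have hL1 : (1:ℝ) ≤ (L:ℝ) := by exact_mod_cast hL
  have hN1 : (1:ℝ) ≤ N := by rw [hNdef]; nlinarith
  have hNpos : (0:ℝ) < N := lt_of_lt_of_le one_pos hN1
  have hexp : (0:ℝ) < Real.exp α := Real.exp_pos α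
  have hNE : (0:ℝ) < N * Real.exp α := mul_pos hNpos hexp
  have hcard : (Fintype.card Λ : ℝ) = N := by
    have h1 : ∀ c : ℤ, (Finset.Icc c (c + L - 1)).card = L := by
      intro c
      rw [Int.card_Icc]
      have : c + L - 1 + 1 - c = (L : ℤ) := by ring
      rw [this, Int.toNat_natCast]
    rw [hNdef, Fintype.card_coe, hΛdef, sqZ, Finset.card_product, h1, h1]
    push_cast
    ring
  have hentry : ∀ x y : Λ, |G x y| ≤ Real.exp α := by
    intro x y
    refine (hbound x y).trans (Real.exp_le_exp.mpr ?_)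
    nlinarith [eudist_nonneg' x.1 y.1, hβ.le]
  -- bound on powers of G
  have key : ∀ k : ℕ, ∀ x y : Λ,
      |(G ^ (k+1)) x y| ≤ (N * Real.exp α)^k * Real.exp (α - β * eudist x.1 y.1) := by
    intro k
    induction k with
    | zero => intro x y; simpa using hbound x y
    | succ k ih =>
      intro x y
      have hsplit : (G ^ (k+1+1)) x y = ∑ z : Λ, (G^(k+1)) x z * G z y := by
        rw [pow_succ, Matrix.mul_apply]
      rw [hsplit]
      have hterm : ∀ z : Λ, |(G^(k+1)) x z * G z y|
          ≤ (N * Real.exp α)^k * Real.exp α * Real.exp (α - β * eudist x.1 y.1) := by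
        intro z
        rw [abs_mul]
        have h1 := ih x z
        have h2 := hbound z y
        have hprod : Real.exp (α - β * eudist x.1 z.1) * Real.exp (α - β * eudist z.1 y.1)
            ≤ Real.exp α * Real.exp (α - β * eudist x.1 y.1) := by
          rw [← Real.exp_add, ← Real.exp_add]
          apply Real.exp_le_exp.mpr
          have htri := eudist_triangle' x.1 z.1 y.1
          nlinarith [hβ.le]
        calc |(G^(k+1)) x z| * |G z y|
            ≤ ((N * Real.exp α)^k * Real.exp (α - β * eudist x.1 z.1))
                * Real.exp (α - β * eudist z.1 y.1) :=
              mul_le_mul h1 h2 (abs_nonneg _)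
                (mul_nonneg (pow_nonneg hNE.le k) (Real.exp_nonneg _))
          _ = (N * Real.exp α)^k * (Real.exp (α - β * eudist x.1 z.1)
                * Real.exp (α - β * eudist z.1 y.1)) := by ring
          _ ≤ (N * Real.exp α)^k
                * (Real.exp α * Real.exp (α - β * eudist x.1 y.1)) :=
              mul_le_mul_of_nonneg_left hprod (pow_nonneg hNE.le k)
          _ = (N * Real.exp α)^k * Real.exp α * Real.exp (α - β * eudist x.1 y.1) := by ring
      calc |∑ z : Λ, (G^(k+1)) x z * G z y| ≤ ∑ z : Λ, |(G^(k+1)) x z * G z y| :=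
          Finset.abs_sum_le_sum_abs _ _
        _ ≤ ∑ _z : Λ, (N * Real.exp α)^k * Real.exp α * Real.exp (α - β * eudist x.1 y.1) :=
            Finset.sum_le_sum (fun z _ => hterm z)
        _ = (Fintype.card Λ : ℝ)
              * ((N * Real.exp α)^k * Real.exp α * Real.exp (α - β * eudist x.1 y.1)) := by
            rw [Finset.sum_const, Finset.card_univ, nsmul_eq_mul]
        _ = (N * Real.exp α)^(k+1) * Real.exp (α - β * eudist x.1 y.1) := by
            rw [hcard, pow_succ]; ring
  -- norm bound on G
  have hGnorm : ‖G‖ ≤ N * Real.exp α := by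
    rw [Matrix.linfty_opNorm_def, ← NNReal.coe_mk (N * Real.exp α) hNE.le, NNReal.coe_le_coe]
    apply Finset.sup_le
    intro i _
    rw [← NNReal.coe_le_coe, NNReal.coe_sum, NNReal.coe_mk]
    calc ∑ j : Λ, ((‖G i j‖₊ : ℝ)) = ∑ j : Λ, |G i j| := by
          simp [Real.norm_eq_abs]
      _ ≤ ∑ _j : Λ, Real.exp α := Finset.sum_le_sum (fun j _ => hentry i j)
      _ = N * Real.exp α := by
          rw [Finset.sum_const, Finset.card_univ, nsmul_eq_mul, hcard]
  have hδb : |δ| * (N * Real.exp α) ≤ 1/2 := by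
    have := mul_le_mul_of_nonneg_right hE hNE.le
    calc |δ| * (N * Real.exp α) ≤ (1 / (2 * N * Real.exp α)) * (N * Real.exp α) := this
      _ = 1/2 := by field_simp
  set M : Matrix Λ Λ ℝ := δ • G with hMdef
  have hMnorm : ‖M‖ < 1 := by
    have h1 : ‖M‖ = |δ| * ‖G‖ := by rw [hMdef, norm_smul, Real.norm_eq_abs]
    have h2 : |δ| * ‖G‖ ≤ |δ| * (N * Real.exp α) :=
      mul_le_mul_of_nonneg_left hGnorm (abs_nonneg _)
    linarith
  have hgeom : (1 - M) * (∑' n : ℕ, M ^ n) = 1 := mul_neg_geom_series M hMnorm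
  have hsummable : Summable (fun n : ℕ => M ^ n) := summable_geometric_of_norm_lt_one hMnorm
  have hfact : Ham V Λ - E • (1 : Matrix Λ Λ ℝ) = A * (1 - M) := by
    rw [mul_sub, mul_one, hMdef, Matrix.mul_smul, hAG, hAdef, hδdef, sub_sub, ← add_smul]
    congr 2
    ring
  have hright : (Ham V Λ - E • (1 : Matrix Λ Λ ℝ)) * ((∑' n : ℕ, M ^ n) * G) = 1 := by
    rw [hfact, mul_assoc A, ← mul_assoc (1 - M), hgeom, one_mul, hAG]
  refine ⟨Matrix.isUnit_det_of_right_inverse hright, fun x y => ?_⟩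
  rw [Matrix.inv_eq_right_inv hright]
  have hCsum : ((∑' n : ℕ, M^n) * G) = ∑' n : ℕ, M^n * G := (hsummable.tsum_mul_right G).symm
  rw [hCsum]
  have hev : (∑' n : ℕ, M^n * G) x y = ∑' n : ℕ, (M^n * G) x y := by
    have hentry_le : ∀ P : Matrix Λ Λ ℝ, |P x y| ≤ ‖P‖ := by
      intro P
      rw [Matrix.linfty_opNorm_def]
      have h1 : ‖P x y‖₊ ≤ ∑ j : Λ, ‖P x j‖₊ :=
        Finset.single_le_sum (f := fun j => ‖P x j‖₊) (fun _ _ => zero_le)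
          (Finset.mem_univ y)
      have h2 : (∑ j : Λ, ‖P x j‖₊) ≤ Finset.univ.sup fun i : Λ => ∑ j : Λ, ‖P i j‖₊ :=
        Finset.le_sup (f := fun i : Λ => ∑ j : Λ, ‖P i j‖₊) (Finset.mem_univ x)
      calc |P x y| = ((‖P x y‖₊ : ℝ)) := by simp [Real.norm_eq_abs]
        _ ≤ _ := NNReal.coe_le_coe.mpr (h1.trans h2)
    let φ : Matrix Λ Λ ℝ →+ ℝ := AddMonoidHom.mk' (fun P => P x y) (fun _ _ => rfl)
    have hφ : Continuous φ := by
      apply AddMonoidHomClass.continuous_of_bound φ 1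
      intro P
      rw [one_mul, Real.norm_eq_abs]
      exact hentry_le P
    exact (((hsummable.mul_right G).hasSum.map φ hφ).tsum_eq).symm
  rw [hev]
  have hterm : ∀ n : ℕ, |(M^n * G) x y| ≤ (1/2)^n * Real.exp (α - β * eudist x.1 y.1) := by
    intro n
    have hMG : M^n * G = δ^n • G^(n+1) := by
      rw [hMdef, smul_pow, Matrix.smul_mul, ← pow_succ]
    have happ : (δ^n • G^(n+1)) x y = δ^n * (G^(n+1)) x y := rfl
    rw [hMG, happ, abs_mul, abs_pow]
    calc |δ|^n * |(G^(n+1)) x y|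
        ≤ |δ|^n * ((N * Real.exp α)^n * Real.exp (α - β * eudist x.1 y.1)) :=
          mul_le_mul_of_nonneg_left (key n x y) (pow_nonneg (abs_nonneg δ) n)
      _ = (|δ| * (N * Real.exp α))^n * Real.exp (α - β * eudist x.1 y.1) := by
          rw [mul_pow]; ring
      _ ≤ (1/2)^n * Real.exp (α - β * eudist x.1 y.1) := by
          apply mul_le_mul_of_nonneg_right _ (Real.exp_nonneg _)
          exact pow_le_pow_left₀ (mul_nonneg (abs_nonneg _) hNE.le) hδb n
  have hgsum : HasSum (fun n : ℕ => (1/2:ℝ)^n * Real.exp (α - β * eudist x.1 y.1))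
      (2 * Real.exp (α - β * eudist x.1 y.1)) := by
    have h := (hasSum_geometric_of_lt_one (by norm_num : (0:ℝ) ≤ 1/2)
      (by norm_num : (1/2:ℝ) < 1)).mul_right (Real.exp (α - β * eudist x.1 y.1))
    rw [show (1 - 1/2 : ℝ)⁻¹ = 2 by norm_num] at h
    exact h
  have hb : ∀ n : ℕ, ‖(M^n * G) x y‖ ≤ (1/2:ℝ)^n * Real.exp (α - β * eudist x.1 y.1) := by
    intro n
    rw [Real.norm_eq_abs]
    exact hterm n
  have hfin := tsum_of_norm_bounded hgsum hb
  rw [Real.norm_eq_abs] at hfin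
  exact hfin
end
end
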